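/- The offsets of the update sequence correspond to 0-bits: let i be positive with m = rmb i, and let u 0 = i, u (j+1) = u j + 2^(rmb (u j)). Then the first offset u 1 - u 0 equals 2^m, and for j ≥ 1, the offset u (j+1) - u j equals 2^{b}, where b is the position of the j-th 0-bit of i among positions strictly greater than m (counting from the least significant such 0-bit), provided the sequence has not yet terminated. -/

import Mathlib

/-- Position of the least significant set bit of a positive natural. -/
def rmb (i : ℕ) : ℕ := padicValNat 2 i

/-- Number of 1-bits in the binary representation. -/
def popcount (i : ℕ) : ℕ := (Nat.bits i).count true

/-- One step of the sum sequence: clear the lowest set bit. -/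
def sumStep (x : ℕ) : ℕ := x - 2 ^ rmb x

/-- The sum sequence of `i`. -/
def sumSeq (i j : ℕ) : ℕ := sumStep^[j] i

/-- One step of the update sequence. -/
def updStep (x : ℕ) : ℕ := x + 2 ^ rmb x

/-- The update sequence of `i`. -/
def updSeq (i j : ℕ) : ℕ := updStep^[j] i

/-- The Fenwick array of `A`: entry `k` sums `A` over `(k - 2^(rmb k), k]`. -/
def fenwick (A : ℕ → ℤ) (k : ℕ) : ℤ := ∑ m ∈ Finset.Ioc (k - 2 ^ rmb k) k, A m

/-!
Write `x = 2^(c+1) q + (2^c - 2^r)` with `r = rmb x`: the bits of `x` from `r` up are a run of ones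
ending just below the zero bit `c`. Adding `2^r` carries through that run, giving `2^c (2q + 1)`,
whose lowest set bit is `c` and whose bits above `c` are those of `x`. By induction, the lowest set
bit of `updSeq i (k + 1)` is the `k`-th zero bit of `i` above `rmb i`, and the bits above it are
still those of `i`.
-/

theorem rmb_two_pow_mul {n o : ℕ} (ho : Odd o) : rmb (2 ^ n * o) = n := by
  have : Fact (Nat.Prime 2) := ⟨Nat.prime_two⟩
  rw [rmb, padicValNat.mul (by positivity) (by rintro rfl; simp at ho), padicValNat.prime_pow,
    padicValNat.eq_zero_of_not_dvd ho.not_two_dvd_nat, add_zero]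

theorem testBit_of_lt_rmb {x t : ℕ} (ht : t < rmb x) : x.testBit t = false := by
  rcases eq_or_ne x 0 with rfl | hx
  · simp
  obtain ⟨n, o, ho, rfl⟩ := Nat.exists_eq_two_pow_mul_odd hx
  rw [rmb_two_pow_mul ho] at ht
  simp [Nat.testBit_two_pow_mul, ht]

theorem testBit_rmb {x : ℕ} (hx : x ≠ 0) : x.testBit (rmb x) = true := by
  obtain ⟨n, o, ho, rfl⟩ := Nat.exists_eq_two_pow_mul_odd hx
  simp [rmb_two_pow_mul ho, Nat.testBit_two_pow_mul, Nat.testBit_zero, Nat.odd_iff.mp ho]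

theorem testBit_two_pow_sub_two_pow {r c t : ℕ} (hrc : r ≤ c) :
    (2 ^ c - 2 ^ r).testBit t = decide (r ≤ t ∧ t < c) := by
  rw [show 2 ^ c - 2 ^ r = 2 ^ r * (2 ^ (c - r) - 1) by
    rw [Nat.mul_sub, mul_one, ← pow_add, Nat.add_sub_cancel' hrc]]
  rw [Nat.testBit_two_pow_mul, Nat.testBit_two_pow_sub_one, Bool.eq_iff_iff]
  simp only [Bool.and_eq_true, decide_eq_true_eq]
  omega

theorem mod_two_pow_succ_eq_of_run {x c : ℕ} (hx : x ≠ 0) (hc : rmb x < c)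
    (hones : ∀ t, rmb x < t → t < c → x.testBit t) (hzero : x.testBit c = false) :
    x % 2 ^ (c + 1) = 2 ^ c - 2 ^ rmb x := by
  apply Nat.eq_of_testBit_eq
  intro t
  rw [Nat.testBit_mod_two_pow, testBit_two_pow_sub_two_pow hc.le]
  rcases lt_trichotomy t (rmb x) with ht | rfl | ht
  · simp [testBit_of_lt_rmb ht, ht]
  · simp [testBit_rmb hx, hc, hc.le]
  · rcases lt_trichotomy t c with htc | rfl | htc
    · simp [hones t ht htc, htc, htc.le, ht.le]
    · simp [hzero]
    · simp [htc.not_ge, htc.not_gt]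

theorem updStep_eq_of_run {x c : ℕ} (hx : x ≠ 0) (hc : rmb x < c)
    (hones : ∀ t, rmb x < t → t < c → x.testBit t) (hzero : x.testBit c = false) :
    updStep x = 2 ^ c * (2 * (x / 2 ^ (c + 1)) + 1) := by
  have hdiv := Nat.div_add_mod x (2 ^ (c + 1))
  rw [mod_two_pow_succ_eq_of_run hx hc hones hzero] at hdiv
  have hle : 2 ^ rmb x ≤ 2 ^ c := Nat.pow_le_pow_right two_pos hc.le
  have hstep : x + 2 ^ rmb x = 2 ^ (c + 1) * (x / 2 ^ (c + 1)) + 2 ^ c := by omega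
  rw [updStep, hstep]
  ring

theorem testBit_updStep_of_run {x c t : ℕ} (hx : x ≠ 0) (hc : rmb x < c)
    (hones : ∀ t, rmb x < t → t < c → x.testBit t) (hzero : x.testBit c = false)
    (ht : c < t) : (updStep x).testBit t = x.testBit t := by
  obtain ⟨s, rfl⟩ := Nat.exists_eq_add_of_lt ht
  have hodd : (2 * (x / 2 ^ (c + 1)) + 1) / 2 = x / 2 ^ (c + 1) := by omega
  rw [updStep_eq_of_run hx hc hones hzero, Nat.testBit_two_pow_mul,
    show c + s + 1 - c = s + 1 by omega, Nat.testBit_succ, hodd, Nat.testBit_div_two_pow,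
    show s + (c + 1) = c + s + 1 by omega]
  simp [ht.le]

theorem rmb_updStep_of_run {x c : ℕ} (hx : x ≠ 0) (hc : rmb x < c)
    (hones : ∀ t, rmb x < t → t < c → x.testBit t) (hzero : x.testBit c = false) :
    rmb (updStep x) = c := by
  rw [updStep_eq_of_run hx hc hones hzero, rmb_two_pow_mul (odd_two_mul_add_one _)]

theorem updSeq_succ (i j : ℕ) : updSeq i (j + 1) = updStep (updSeq i j) :=
  Function.iterate_succ_apply' updStep j i

theorem updSeq_succ_sub (i j : ℕ) : updSeq i (j + 1) - updSeq i j = 2 ^ rmb (updSeq i j) := by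
  rw [updSeq_succ, updStep, Nat.add_sub_cancel_left]

theorem infinite_setOf_testBit_eq_false (i n : ℕ) :
    {b | n < b ∧ i.testBit b = false}.Infinite := by
  refine Set.infinite_of_forall_exists_gt fun a => ⟨a + n + i + 1, ⟨by omega, ?_⟩, by omega⟩
  exact Nat.testBit_lt_two_pow <|
    Nat.lt_two_pow_self.trans_le (Nat.pow_le_pow_right two_pos (by omega))

noncomputable def highZeroBit (i k : ℕ) : ℕ :=
  Nat.nth (fun b => rmb i < b ∧ i.testBit b = false) k

theorem rmb_lt_highZeroBit (i k : ℕ) : rmb i < highZeroBit i k :=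
  (Nat.nth_mem_of_infinite (infinite_setOf_testBit_eq_false i (rmb i)) k).1

theorem testBit_highZeroBit (i k : ℕ) : i.testBit (highZeroBit i k) = false :=
  (Nat.nth_mem_of_infinite (infinite_setOf_testBit_eq_false i (rmb i)) k).2

theorem highZeroBit_strictMono (i : ℕ) : StrictMono (highZeroBit i) :=
  Nat.nth_strictMono (infinite_setOf_testBit_eq_false i (rmb i))

theorem testBit_of_lt_highZeroBit_zero {i t : ℕ} (ht : rmb i < t) (ht0 : t < highZeroBit i 0) :
    i.testBit t := by
  by_contra h
  rw [highZeroBit, Nat.nth_zero] at ht0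
  exact ht0.not_ge (Nat.sInf_le ⟨ht, by simpa using h⟩)

theorem testBit_of_highZeroBit_lt_of_lt_succ {i k t : ℕ} (ht : highZeroBit i k < t)
    (ht1 : t < highZeroBit i (k + 1)) : i.testBit t := by
  by_contra h
  exact ht.not_ge (Nat.le_nth_of_lt_nth_succ ht1
    ⟨(rmb_lt_highZeroBit i k).trans ht, by simpa using h⟩)

theorem rmb_updSeq_succ_and_testBit {i : ℕ} (hi : i ≠ 0) (k : ℕ) :
    rmb (updSeq i (k + 1)) = highZeroBit i k ∧
      ∀ t, highZeroBit i k < t → (updSeq i (k + 1)).testBit t = i.testBit t := by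
  induction k with
  | zero =>
    have hones : ∀ t, rmb i < t → t < highZeroBit i 0 → i.testBit t :=
      fun _ => testBit_of_lt_highZeroBit_zero
    rw [updSeq_succ, updSeq, Function.iterate_zero_apply]
    exact ⟨rmb_updStep_of_run hi (rmb_lt_highZeroBit i 0) hones (testBit_highZeroBit i 0),
      fun t ht => testBit_updStep_of_run hi (rmb_lt_highZeroBit i 0) hones
        (testBit_highZeroBit i 0) ht⟩
  | succ k ih =>
    obtain ⟨hrmb, hagree⟩ := ih
    set x := updSeq i (k + 1)
    have hx : x ≠ 0 := by simp only [x, updSeq_succ, updStep]; positivity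
    have hlt : highZeroBit i k < highZeroBit i (k + 1) := highZeroBit_strictMono i k.lt_succ_self
    have hc : rmb x < highZeroBit i (k + 1) := hrmb ▸ hlt
    have hones : ∀ t, rmb x < t → t < highZeroBit i (k + 1) → x.testBit t := fun t ht htc =>
      (hagree t (hrmb ▸ ht)).trans (testBit_of_highZeroBit_lt_of_lt_succ (hrmb ▸ ht) htc)
    have hzero : x.testBit (highZeroBit i (k + 1)) = false := by
      rw [hagree _ hlt, testBit_highZeroBit]
    rw [updSeq_succ]
    exact ⟨rmb_updStep_of_run hx hc hones hzero, fun t ht =>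
      (testBit_updStep_of_run hx hc hones hzero ht).trans (hagree t (hlt.trans ht))⟩

theorem updSeq_offsets (i : ℕ) (hi : 0 < i) :
    updSeq i 1 - updSeq i 0 = 2 ^ rmb i ∧
      ∀ j, 1 ≤ j →
        updSeq i (j + 1) - updSeq i j =
          2 ^ Nat.nth (fun b => rmb i < b ∧ i.testBit b = false) (j - 1) := by
  refine ⟨updSeq_succ_sub i 0, fun j hj => ?_⟩
  obtain ⟨k, rfl⟩ := Nat.exists_eq_add_of_le' hj
  rw [updSeq_succ_sub, (rmb_updSeq_succ_and_testBit hi.ne' k).1, Nat.add_sub_cancel]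
  rfl
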